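/- There exists a constant C > 0 such that for all p ∈ ℝᵈ, H̄(p) ≥ |p|² − C. In particular H̄(p) → ∞ as |p| → ∞. More precisely, if (φ¹, φ²) is a smooth ℤᵈ-periodic solution of the cell problem at p with constant λ, then λ ≥ |p|² − |p|·‖Dψ‖_∞ − ‖Δψ‖_∞ − max(‖ν¹‖_∞, ‖ν²‖_∞). -/

import Mathlib

/-
The continuous periodic function `φ²` attains its maximum at some `y₀`, where `Dφ²(y₀) = 0` and
`Δφ²(y₀) ≤ 0`, so the second cell equation at `y₀` gives
`λ = −Δφ²(y₀) + |p|² + ν¹ e^{φ²−φ¹}(y₀) − ν²(y₀) > |p|² − ν²(y₀)`.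
-/

open MeasureTheory Filter Set
open scoped Topology

noncomputable section

/-- `ℝᵈ` as a Euclidean space. -/
abbrev Euc (d : ℕ) := EuclideanSpace ℝ (Fin d)

/-- `ℤᵈ`-periodicity of a function on `ℝᵈ`. -/
def ZPer {d : ℕ} (f : Euc d → ℝ) : Prop :=
  ∀ (x : Euc d) (k : Fin d → ℤ),
    f (x + (EuclideanSpace.equiv (Fin d) ℝ).symm (fun i => (k i : ℝ))) = f x

/-- The Laplacian of a scalar function on `ℝᵈ`. -/
def lap {d : ℕ} (f : Euc d → ℝ) (x : Euc d) : ℝ :=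
  ∑ i : Fin d,
    fderiv ℝ (fun y => fderiv ℝ f y (EuclideanSpace.single i 1)) x (EuclideanSpace.single i 1)

/-- The divergence of a vector field on `ℝᵈ`. -/
def dvg {d : ℕ} (F : Euc d → Euc d) (x : Euc d) : ℝ :=
  ∑ i : Fin d, fderiv ℝ (fun y => F y i) x (EuclideanSpace.single i 1)

/-- The data `ψ, ν¹, ν²` are smooth, `ℤᵈ`-periodic, with `ν¹ > 0`, `ν² > 0`. -/
def GoodData {d : ℕ} (ψ ν1 ν2 : Euc d → ℝ) : Prop :=
  ContDiff ℝ (⊤ : ℕ∞) ψ ∧ ContDiff ℝ (⊤ : ℕ∞) ν1 ∧ ContDiff ℝ (⊤ : ℕ∞) ν2 ∧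
  ZPer ψ ∧ ZPer ν1 ∧ ZPer ν2 ∧ (∀ y, 0 < ν1 y) ∧ (∀ y, 0 < ν2 y)

/-- `(n1, n2)` is a classical solution of the weakly coupled Fokker–Planck system
`∂ₜn¹ − εΔn¹ − div(n¹ Dψ(x/ε)) + ε⁻¹ν¹(x/ε)n¹ = ε⁻¹ν²(x/ε)n²`,
`∂ₜn² − εΔn² + ε⁻¹ν²(x/ε)n² = ε⁻¹ν¹(x/ε)n¹` on `ℝᵈ × (0,∞)`,
continuous up to `t = 0`. -/
def IsFP {d : ℕ} (ψ ν1 ν2 : Euc d → ℝ) (ε : ℝ) (n1 n2 : Euc d → ℝ → ℝ) : Prop :=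
  ContinuousOn (fun q : Euc d × ℝ => n1 q.1 q.2) (univ ×ˢ Ici 0) ∧
  ContinuousOn (fun q : Euc d × ℝ => n2 q.1 q.2) (univ ×ˢ Ici 0) ∧
  ContDiffOn ℝ (⊤ : ℕ∞) (fun q : Euc d × ℝ => n1 q.1 q.2) (univ ×ˢ Ioi 0) ∧
  ContDiffOn ℝ (⊤ : ℕ∞) (fun q : Euc d × ℝ => n2 q.1 q.2) (univ ×ˢ Ioi 0) ∧
  (∀ (x : Euc d) (t : ℝ), 0 < t →
    deriv (fun s => n1 x s) t - ε * lap (fun y => n1 y t) x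
      - dvg (fun y => n1 y t • gradient ψ (ε⁻¹ • y)) x
      + ε⁻¹ * ν1 (ε⁻¹ • x) * n1 x t = ε⁻¹ * ν2 (ε⁻¹ • x) * n2 x t) ∧
  (∀ (x : Euc d) (t : ℝ), 0 < t →
    deriv (fun s => n2 x s) t - ε * lap (fun y => n2 y t) x
      + ε⁻¹ * ν2 (ε⁻¹ • x) * n2 x t = ε⁻¹ * ν1 (ε⁻¹ • x) * n1 x t)

/-- `(φ1, φ2)` is a smooth `ℤᵈ`-periodic solution of the cell problem at `p` with constant `lam`:
`−Δφ¹ + |Dφ¹+p|² − Dψ·(Dφ¹+p) + Δψ + ν² e^{φ¹−φ²} = ν¹ + λ`,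
`−Δφ² + |Dφ²+p|² + ν¹ e^{φ²−φ¹} = ν² + λ`. -/
def IsCellSol {d : ℕ} (ψ ν1 ν2 : Euc d → ℝ) (p : Euc d) (lam : ℝ) (φ1 φ2 : Euc d → ℝ) : Prop :=
  ContDiff ℝ (⊤ : ℕ∞) φ1 ∧ ContDiff ℝ (⊤ : ℕ∞) φ2 ∧ ZPer φ1 ∧ ZPer φ2 ∧
  (∀ y, -lap φ1 y + ‖gradient φ1 y + p‖ ^ 2
      - (@inner ℝ _ _ (gradient ψ y) (gradient φ1 y + p)) + lap ψ y
      + ν2 y * Real.exp (φ1 y - φ2 y) = ν1 y + lam) ∧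
  (∀ y, -lap φ2 y + ‖gradient φ2 y + p‖ ^ 2
      + ν1 y * Real.exp (φ2 y - φ1 y) = ν2 y + lam)

theorem IsLocalMax.deriv_deriv_nonpos {g : ℝ → ℝ} {t : ℝ} (h : IsLocalMax g t)
    (hc : ContinuousAt g t) : deriv (deriv g) t ≤ 0 := by
  by_contra! hpos
  -- A positive second derivative would make `t` also a local minimum, so `g` is locally constant.
  have hmin : IsLocalMin g t := isLocalMin_of_deriv_deriv_pos hpos h.deriv_eq_zero hc
  have hconst : g =ᶠ[𝓝 t] fun _ => g t :=
    (hmin.and h).mono fun s hs => le_antisymm hs.2 hs.1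
  have hderiv : deriv g =ᶠ[𝓝 t] fun _ => 0 := hconst.deriv.trans (by simp)
  simp [hderiv.deriv_eq] at hpos

theorem IsLocalMax.fderiv_fderiv_apply_nonpos {E : Type*} [NormedAddCommGroup E]
    [NormedSpace ℝ E] {f : E → ℝ} {x : E} (h : IsLocalMax f x) (hf : ContDiff ℝ 2 f) (v : E) :
    fderiv ℝ (fun y => fderiv ℝ f y v) x v ≤ 0 := by
  set line : ℝ → E := fun t => x + t • v
  have hline : ∀ t, HasDerivAt line v t := fun t => by
    simpa only [id, one_smul] using ((hasDerivAt_id t).smul_const v).const_add x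
  have hline0 : line 0 = x := by simp [line]
  have hderiv : deriv (f ∘ line) = fun t => fderiv ℝ f (line t) v := funext fun t =>
    ((hf.differentiable two_ne_zero _).hasFDerivAt.comp_hasDerivAt t (hline t)).deriv
  have hf' : Differentiable ℝ fun y => fderiv ℝ f y v :=
    ((hf.fderiv_right le_rfl).clm_apply contDiff_const).differentiable one_ne_zero
  have hsecond : deriv (deriv (f ∘ line)) 0 = fderiv ℝ (fun y => fderiv ℝ f y v) x v := by
    rw [hderiv, ← hline0]
    exact ((hf' _).hasFDerivAt.comp_hasDerivAt 0 (hline 0)).deriv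
  rw [← hsecond]
  exact (hline0 ▸ h).comp_continuous (hline 0).continuousAt |>.deriv_deriv_nonpos
    (hf.continuous.continuousAt.comp (hline 0).continuousAt)

theorem IsLocalMax.gradient_eq_zero {F : Type*} [NormedAddCommGroup F] [InnerProductSpace ℝ F]
    [CompleteSpace F] {f : F → ℝ} {x : F} (h : IsLocalMax f x) : gradient f x = 0 := by
  simp [gradient, h.fderiv_eq_zero]

theorem IsLocalMax.lap_nonpos {d : ℕ} {f : Euc d → ℝ} {x : Euc d} (h : IsLocalMax f x)
    (hf : ContDiff ℝ 2 f) : lap f x ≤ 0 :=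
  Finset.sum_nonpos fun _ _ => h.fderiv_fderiv_apply_nonpos hf _

theorem ZPer.exists_forall_ge {d : ℕ} {f : Euc d → ℝ} (hp : ZPer f) (hc : Continuous f) :
    ∃ x₀, ∀ x, f x ≤ f x₀ := by
  set e := EuclideanSpace.equiv (Fin d) ℝ
  set cube : Set (Euc d) := e ⁻¹' univ.pi fun _ => Icc 0 1
  have hcube : IsCompact cube :=
    e.toHomeomorph.isCompact_preimage.2 (isCompact_univ_pi fun _ => isCompact_Icc)
  obtain ⟨x₀, -, hx₀⟩ := hcube.exists_isMaxOn ⟨0, fun _ _ => by simp⟩ hc.continuousOn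
  refine ⟨x₀, fun x => ?_⟩
  -- Translating by `-⌊x⌋` moves `x` to its fractional part, which lies in the cube.
  have hfract : x + e.symm (fun i => ((-⌊x i⌋ : ℤ) : ℝ)) ∈ cube := fun i _ => by
    show x i + ((-⌊x i⌋ : ℤ) : ℝ) ∈ Icc 0 1
    rw [Int.cast_neg, ← sub_eq_add_neg]
    exact ⟨Int.fract_nonneg _, (Int.fract_lt_one _).le⟩
  rw [← hp x fun i => -⌊x i⌋]
  exact hx₀ hfract

theorem IsCellSol.sq_norm_sub_le {d : ℕ} {ψ ν1 ν2 φ1 φ2 : Euc d → ℝ} {p : Euc d} {lam M : ℝ}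
    (hsol : IsCellSol ψ ν1 ν2 p lam φ1 φ2) (hν1 : ∀ y, 0 < ν1 y) (hM : ∀ y, ν2 y ≤ M) :
    ‖p‖ ^ 2 - M ≤ lam := by
  obtain ⟨-, hφ2, -, hper2, -, heq2⟩ := hsol
  obtain ⟨y₀, hy₀⟩ := hper2.exists_forall_ge hφ2.continuous
  have hmax : IsLocalMax φ2 y₀ := Eventually.of_forall hy₀
  have hcell := heq2 y₀
  rw [hmax.gradient_eq_zero, zero_add] at hcell
  have hlap := hmax.lap_nonpos (hφ2.of_le (by norm_cast))
  have hcoupling := mul_pos (hν1 y₀) (Real.exp_pos (φ2 y₀ - φ1 y₀))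
  linarith [hM y₀]

theorem effective_hamiltonian_coercive_general
    {d : ℕ} (ψ ν1 ν2 : Euc d → ℝ) (hdata : GoodData ψ ν1 ν2)
    (Hbar : Euc d → ℝ)
    (hHbar : ∀ (p : Euc d) (lam : ℝ),
      (∃ φ1 φ2 : Euc d → ℝ, IsCellSol ψ ν1 ν2 p lam φ1 φ2) ↔ lam = Hbar p) :
    (∃ C : ℝ, 0 < C ∧ ∀ p : Euc d, ‖p‖ ^ 2 - C ≤ Hbar p) ∧
    Tendsto Hbar (comap (fun p : Euc d => ‖p‖) atTop) atTop ∧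
    (∀ (p : Euc d) (lam : ℝ) (φ1 φ2 : Euc d → ℝ), IsCellSol ψ ν1 ν2 p lam φ1 φ2 →
      ‖p‖ ^ 2 - ‖p‖ * (⨆ y : Euc d, ‖gradient ψ y‖) - (⨆ y : Euc d, |lap ψ y|)
        - max (⨆ y : Euc d, |ν1 y|) (⨆ y : Euc d, |ν2 y|) ≤ lam) := by
  obtain ⟨-, -, hν2, -, -, hper2, hν1, -⟩ := hdata
  set M := ⨆ y : Euc d, |ν2 y|
  have hM : ∀ y, ν2 y ≤ M := by
    obtain ⟨y₁, hy₁⟩ :=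
      ZPer.exists_forall_ge (fun x k => congrArg abs (hper2 x k)) hν2.continuous.abs
    exact fun y => (le_abs_self _).trans (le_ciSup ⟨_, forall_mem_range.2 hy₁⟩ y)
  have hM0 : 0 ≤ M := Real.iSup_nonneg fun _ => abs_nonneg _
  have hbound (p : Euc d) : ‖p‖ ^ 2 - M ≤ Hbar p :=
    let ⟨_, _, hsol⟩ := (hHbar p _).2 rfl
    hsol.sq_norm_sub_le hν1 hM
  refine ⟨⟨M + 1, by linarith, fun p => by linarith [hbound p]⟩, ?_, fun p lam φ1 φ2 hsol => ?_⟩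
  · refine tendsto_atTop_mono hbound (tendsto_atTop_add_const_right _ (-M) ?_)
    exact (tendsto_pow_atTop two_ne_zero).comp tendsto_comap
  · linarith [hsol.sq_norm_sub_le hν1 hM, le_max_right (⨆ y, |ν1 y|) M,
      mul_nonneg (norm_nonneg p) (Real.iSup_nonneg fun y => norm_nonneg (gradient ψ y)),
      Real.iSup_nonneg fun y => abs_nonneg (lap ψ y)]

/-- **Lemma 2.1 (coercivity).** There is `C > 0` with `H̄(p) ≥ |p|² − C` for all `p`; in
particular `H̄(p) → ∞` as `|p| → ∞`. More precisely, any constant `λ` of the cell problem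
at `p` satisfies `λ ≥ |p|² − |p|‖Dψ‖_∞ − ‖Δψ‖_∞ − max(‖ν¹‖_∞, ‖ν²‖_∞)`. -/
theorem effective_hamiltonian_coercive
    {d : ℕ} (hd : 1 ≤ d) (ψ ν1 ν2 : Euc d → ℝ) (hdata : GoodData ψ ν1 ν2)
    (Hbar : Euc d → ℝ)
    (hHbar : ∀ (p : Euc d) (lam : ℝ),
      (∃ φ1 φ2 : Euc d → ℝ, IsCellSol ψ ν1 ν2 p lam φ1 φ2) ↔ lam = Hbar p) :
    (∃ C : ℝ, 0 < C ∧ ∀ p : Euc d, ‖p‖ ^ 2 - C ≤ Hbar p) ∧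
    Tendsto Hbar (comap (fun p : Euc d => ‖p‖) atTop) atTop ∧
    (∀ (p : Euc d) (lam : ℝ) (φ1 φ2 : Euc d → ℝ), IsCellSol ψ ν1 ν2 p lam φ1 φ2 →
      ‖p‖ ^ 2 - ‖p‖ * (⨆ y : Euc d, ‖gradient ψ y‖) - (⨆ y : Euc d, |lap ψ y|)
        - max (⨆ y : Euc d, |ν1 y|) (⨆ y : Euc d, |ν2 y|) ≤ lam) :=
  effective_hamiltonian_coercive_general ψ ν1 ν2 hdata Hbar hHbar

end
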